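/- arXiv:1001.0078 — 3 statements merged into one kernel-verified Lean document; each statement's English description precedes it below -/
import Mathlib

section
/- Let Γ₁, Γ₂ be M×N complex matrices with r_max = max_{(α,β)≠(0,0)} rank(αΓ₁ + βΓ₂) and r_min = min_{(α,β)≠(0,0)} rank(αΓ₁ + βΓ₂). Then there exist two linearly independent vectors (t₁₁, t₁₂), (t₂₁, t₂₂) ∈ ℂ² (i.e., an invertible 2×2 matrix T) such that rank(t₁₁Γ₁ + t₁₂Γ₂) = r_max and rank(t₂₁Γ₁ + t₂₂Γ₂) = r_min. Hence every pair in C_{n,l} is SLOCC equivalent to a pair (Γ₁', Γ₂') with rank(Γ₁') = n and rank(Γ₂') = l. -/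
open Matrix

/-- The set of ranks attained by the matrix pencil
{αΓ₁ + βΓ₂ : (α,β) ∈ ℂ² \ {(0,0)}}. -/
def pencilRankSet {M N : ℕ} (Γ₁ Γ₂ : Matrix (Fin M) (Fin N) ℂ) : Set ℕ :=
  {r | ∃ α β : ℂ, (α ≠ 0 ∨ β ≠ 0) ∧ (α • Γ₁ + β • Γ₂).rank = r}

section Pencil

variable {K : Type*} [Field K] {m n : Type*} [Fintype n]

lemma exists_eq_mul_of_mul_eq_mul {α β γ δ : K} (hαβ : α ≠ 0 ∨ β ≠ 0) (hdet : α * δ = β * γ) :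
    ∃ c : K, γ = c * α ∧ δ = c * β := by
  rcases hαβ with hα | hβ
  · exact ⟨γ / α, by field_simp, by field_simp; linear_combination hdet⟩
  · exact ⟨δ / β, by field_simp; linear_combination -hdet, by field_simp⟩

lemma rank_pencil_eq_of_mul_eq_mul (A B : Matrix m n K) {α β γ δ : K}
    (hαβ : α ≠ 0 ∨ β ≠ 0) (hγδ : γ ≠ 0 ∨ δ ≠ 0) (hdet : α * δ = β * γ) :
    (γ • A + δ • B).rank = (α • A + β • B).rank := by
  obtain ⟨c, rfl, rfl⟩ := exists_eq_mul_of_mul_eq_mul hαβ hdet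
  have hc : c ≠ 0 := by
    rintro rfl
    simp at hγδ
  rw [mul_smul, mul_smul, ← smul_add]
  exact rank_smul_of_mem_nonZeroDivisors _ (mem_nonZeroDivisors_of_ne_zero hc)

end Pencil

section PencilRankSet

variable {M N : ℕ} (Γ₁ Γ₂ : Matrix (Fin M) (Fin N) ℂ)

lemma rank_left_mem_pencilRankSet : Γ₁.rank ∈ pencilRankSet Γ₁ Γ₂ :=
  ⟨1, 0, Or.inl one_ne_zero, by simp⟩

lemma rank_right_mem_pencilRankSet : Γ₂.rank ∈ pencilRankSet Γ₁ Γ₂ :=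
  ⟨0, 1, Or.inr one_ne_zero, by simp⟩

lemma bddAbove_pencilRankSet : BddAbove (pencilRankSet Γ₁ Γ₂) := by
  refine ⟨M, ?_⟩
  rintro _ ⟨α, β, -, rfl⟩
  simpa using rank_le_card_height (α • Γ₁ + β • Γ₂)

lemma sSup_pencilRankSet_mem : sSup (pencilRankSet Γ₁ Γ₂) ∈ pencilRankSet Γ₁ Γ₂ :=
  Nat.sSup_mem ⟨_, rank_left_mem_pencilRankSet Γ₁ Γ₂⟩ (bddAbove_pencilRankSet Γ₁ Γ₂)

lemma sInf_pencilRankSet_mem : sInf (pencilRankSet Γ₁ Γ₂) ∈ pencilRankSet Γ₁ Γ₂ :=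
  Nat.sInf_mem ⟨_, rank_left_mem_pencilRankSet Γ₁ Γ₂⟩

lemma eq_sSup_pencilRankSet_of_sSup_eq_sInf {r : ℕ} (hr : r ∈ pencilRankSet Γ₁ Γ₂)
    (h : sSup (pencilRankSet Γ₁ Γ₂) = sInf (pencilRankSet Γ₁ Γ₂)) :
    r = sSup (pencilRankSet Γ₁ Γ₂) :=
  le_antisymm (le_csSup (bddAbove_pencilRankSet Γ₁ Γ₂) hr) (h ▸ Nat.sInf_le hr)

/-- If the extreme ranks differ, coefficient vectors realizing them cannot be proportional. -/
lemma exists_isUnit_pencil_rank_sSup_sInf :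
    ∃ T : Matrix (Fin 2) (Fin 2) ℂ, IsUnit T ∧
      (T 0 0 • Γ₁ + T 0 1 • Γ₂).rank = sSup (pencilRankSet Γ₁ Γ₂) ∧
      (T 1 0 • Γ₁ + T 1 1 • Γ₂).rank = sInf (pencilRankSet Γ₁ Γ₂) := by
  by_cases h : sSup (pencilRankSet Γ₁ Γ₂) = sInf (pencilRankSet Γ₁ Γ₂)
  · refine ⟨1, isUnit_one, ?_, ?_⟩
    · simpa using eq_sSup_pencilRankSet_of_sSup_eq_sInf Γ₁ Γ₂
        (rank_left_mem_pencilRankSet Γ₁ Γ₂) h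
    · simpa [← h] using eq_sSup_pencilRankSet_of_sSup_eq_sInf Γ₁ Γ₂
        (rank_right_mem_pencilRankSet Γ₁ Γ₂) h
  obtain ⟨α, β, hαβ, hmax⟩ := sSup_pencilRankSet_mem Γ₁ Γ₂
  obtain ⟨γ, δ, hγδ, hmin⟩ := sInf_pencilRankSet_mem Γ₁ Γ₂
  refine ⟨!![α, β; γ, δ], ?_, by simpa using hmax, by simpa using hmin⟩
  rw [isUnit_iff_isUnit_det, det_fin_two_of, isUnit_iff_ne_zero, sub_ne_zero]
  intro hdet
  exact h (hmax ▸ hmin ▸ (rank_pencil_eq_of_mul_eq_mul Γ₁ Γ₂ hαβ hγδ hdet).symm)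

end PencilRankSet

theorem stmt_6_general (M N : ℕ)
    (Γ₁ Γ₂ : Matrix (Fin M) (Fin N) ℂ) :
    (∃ T : Matrix (Fin 2) (Fin 2) ℂ, IsUnit T ∧
      (T 0 0 • Γ₁ + T 0 1 • Γ₂).rank = sSup (pencilRankSet Γ₁ Γ₂) ∧
      (T 1 0 • Γ₁ + T 1 1 • Γ₂).rank = sInf (pencilRankSet Γ₁ Γ₂)) ∧
    (∃ (T : Matrix (Fin 2) (Fin 2) ℂ) (P : Matrix (Fin M) (Fin M) ℂ)
        (Q : Matrix (Fin N) (Fin N) ℂ),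
      IsUnit T ∧ IsUnit P ∧ IsUnit Q ∧
      (T 0 0 • (P * Γ₁ * Q) + T 0 1 • (P * Γ₂ * Q)).rank = sSup (pencilRankSet Γ₁ Γ₂) ∧
      (T 1 0 • (P * Γ₁ * Q) + T 1 1 • (P * Γ₂ * Q)).rank = sInf (pencilRankSet Γ₁ Γ₂)) := by
  obtain ⟨T, hT, hmax, hmin⟩ := exists_isUnit_pencil_rank_sSup_sInf Γ₁ Γ₂
  exact ⟨⟨T, hT, hmax, hmin⟩, T, 1, 1, hT, isUnit_one, isUnit_one,
    by simpa using hmax, by simpa using hmin⟩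

/-- There is an invertible 2×2 matrix T whose rows realize
r_max and r_min of the pencil; hence every pair in C_{n,l} is SLOCC
equivalent to a pair (Γ₁', Γ₂') with rank(Γ₁') = n and rank(Γ₂') = l. -/
theorem stmt_6 (M N : ℕ) (hM : 0 < M) (hMN : M ≤ N)
    (Γ₁ Γ₂ : Matrix (Fin M) (Fin N) ℂ) :
    (∃ T : Matrix (Fin 2) (Fin 2) ℂ, IsUnit T ∧
      (T 0 0 • Γ₁ + T 0 1 • Γ₂).rank = sSup (pencilRankSet Γ₁ Γ₂) ∧
      (T 1 0 • Γ₁ + T 1 1 • Γ₂).rank = sInf (pencilRankSet Γ₁ Γ₂)) ∧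
    (∃ (T : Matrix (Fin 2) (Fin 2) ℂ) (P : Matrix (Fin M) (Fin M) ℂ)
        (Q : Matrix (Fin N) (Fin N) ℂ),
      IsUnit T ∧ IsUnit P ∧ IsUnit Q ∧
      (T 0 0 • (P * Γ₁ * Q) + T 0 1 • (P * Γ₂ * Q)).rank = sSup (pencilRankSet Γ₁ Γ₂) ∧
      (T 1 0 • (P * Γ₁ * Q) + T 1 1 • (P * Γ₂ * Q)).rank = sInf (pencilRankSet Γ₁ Γ₂)) :=
  stmt_6_general M N Γ₁ Γ₂
end

section
/- Let M < N, Γ₁ = (I_M | 0_{M×(N−M)}), and Γ₂ = (A | B) with B of size M×(N−M) and r = rank(B). Then there exist P ∈ GL_M(ℂ) and Q ∈ GL_N(ℂ) such that P Γ₁ Q = Γ₁ and P Γ₂ Q has the block form [[A', B', 0_{(M−r)×(N−M)}], [0_{r×(M−r)}, 0_{r×r}, E']] with respect to the row partition M = (M−r) + r and column partition N = (M−r) + r + (N−M), where A' is an (M−r)×(M−r) complex matrix, B' is an (M−r)×r complex matrix, and E' = (0_{r×(N−M−r)} | I_r). -/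
/-!
By the rank normal form there are invertible `P`, `R` with `P * B * R = [[0, 0], [0, 1]]`.
For `Q = [[P⁻¹, 0], [R * C, R]]` we get `P * Γ₁ * Q = Γ₁` and
`P * Γ₂ * Q = (P * A * P⁻¹ + P * B * R * C | P * B * R)`; as `P * B * R * C` consists of the
bottom `r` rows of `C`, taking these to be minus the bottom rows of `P * A * P⁻¹` clears them.
The rank normal form comes from a basis of `ker B` joined with a basis of a complement `U`,
whose image under `B` is a basis of `range B`, joined in turn with a basis of a complement.
-/

open Matrix Module Submodule LinearMap

namespace LinearMap

variable {K V W : Type*} [Field K] [AddCommGroup V] [Module K V] [AddCommGroup W] [Module K W]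

noncomputable def equivRangeOfIsCompl (f : V →ₗ[K] W) {U : Submodule K V}
    (hU : IsCompl (ker f) U) : U ≃ₗ[K] range f :=
  (quotientEquivOfIsCompl _ U hU).symm ≪≫ₗ f.quotKerEquivRange

@[simp]
theorem coe_equivRangeOfIsCompl_apply (f : V →ₗ[K] W) {U : Submodule K V}
    (hU : IsCompl (ker f) U) (u : U) : (f.equivRangeOfIsCompl hU u : W) = f u :=
  rfl

theorem exists_basis_toMatrix_eq_fromBlocks_zero_zero_zero_one [FiniteDimensional K V]
    [FiniteDimensional K W] {ι κ : Type*} [Fintype ι] [Fintype κ] [DecidableEq κ] {r : ℕ}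
    (f : V →ₗ[K] W) (hf : finrank K (range f) = r) (hV : finrank K V = Fintype.card κ + r)
    (hW : finrank K W = Fintype.card ι + r) :
    ∃ (bV : Basis (κ ⊕ Fin r) K V) (bW : Basis (ι ⊕ Fin r) K W),
      toMatrix bV bW f = fromBlocks 0 0 0 1 := by
  classical
  obtain ⟨U, hU⟩ := (ker f).exists_isCompl
  obtain ⟨C, hC⟩ := (range f).exists_isCompl
  have hker : finrank K (ker f) = Fintype.card κ := by
    have := f.finrank_range_add_finrank_ker; omega
  have hUr : finrank K U = r := (f.equivRangeOfIsCompl hU).finrank_eq.trans hf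
  have hCι : finrank K C = Fintype.card ι := by
    have := Submodule.finrank_add_eq_of_isCompl hC; omega
  let bU := finBasisOfFinrankEq K U hUr
  let bV := ((finBasisOfFinrankEq K _ hker).reindex (Fintype.equivFin κ).symm).prod bU
    |>.map (prodEquivOfIsCompl _ _ hU)
  let bW := ((finBasisOfFinrankEq K _ hCι).reindex (Fintype.equivFin ι).symm).prod
    (bU.map (f.equivRangeOfIsCompl hU)) |>.map (prodEquivOfIsCompl _ _ hC.symm)
  have hf_inl (k : κ) : f (bV (.inl k)) = 0 := by
    simp [bV, Basis.prod_apply, coe_prodEquivOfIsCompl']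
  have hf_inr (j : Fin r) : f (bV (.inr j)) = bW (.inr j) := by
    simp [bV, bW, Basis.prod_apply, coe_prodEquivOfIsCompl']
  refine ⟨bV, bW, ?_⟩
  ext i (k | j)
  · rcases i with i | i <;> simp [toMatrix_apply, hf_inl]
  · rcases i with i | i <;>
      simp [toMatrix_apply, hf_inr, Finsupp.single_apply, one_apply, eq_comm]

end LinearMap

namespace Matrix

variable {K ι κ : Type*} [Field K] [Fintype ι] [Fintype κ] [DecidableEq ι] [DecidableEq κ]

theorem exists_isUnit_mul_mul_eq_fromBlocks_zero_zero_zero_one {r : ℕ}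
    (B : Matrix (ι ⊕ Fin r) (κ ⊕ Fin r) K) (hB : B.rank = r) :
    ∃ (P : Matrix (ι ⊕ Fin r) (ι ⊕ Fin r) K) (R : Matrix (κ ⊕ Fin r) (κ ⊕ Fin r) K),
      IsUnit P ∧ IsUnit R ∧ P * B * R = fromBlocks 0 0 0 1 := by
  obtain ⟨bV, bW, hB'⟩ := exists_basis_toMatrix_eq_fromBlocks_zero_zero_zero_one (ι := ι) (κ := κ)
    (toLin (Pi.basisFun K _) (Pi.basisFun K _) B) hB (by simp) (by simp)
  refine ⟨bW.toMatrix (Pi.basisFun K _), (Pi.basisFun K _).toMatrix bV,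
    @isUnit_of_invertible _ _ _ (bW.invertibleToMatrix _),
    @isUnit_of_invertible _ _ _ ((Pi.basisFun K _).invertibleToMatrix bV), ?_⟩
  rw [← hB', ← basis_toMatrix_mul_linearMap_toMatrix_mul_basis_toMatrix bV (Pi.basisFun K _) bW
    (Pi.basisFun K _), toMatrix_toLin]

end Matrix

theorem stmt_10_general (m r s : ℕ)
    (A : Matrix (Fin m ⊕ Fin r) (Fin m ⊕ Fin r) ℂ)
    (B : Matrix (Fin m ⊕ Fin r) (Fin s ⊕ Fin r) ℂ)
    (hB : B.rank = r)
    (Γ₁ Γ₂ : Matrix (Fin m ⊕ Fin r) ((Fin m ⊕ Fin r) ⊕ (Fin s ⊕ Fin r)) ℂ)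
    (hΓ₁ : Γ₁ = Matrix.fromCols (1 : Matrix (Fin m ⊕ Fin r) (Fin m ⊕ Fin r) ℂ)
                  (0 : Matrix (Fin m ⊕ Fin r) (Fin s ⊕ Fin r) ℂ))
    (hΓ₂ : Γ₂ = Matrix.fromCols A B) :
    ∃ (P : Matrix (Fin m ⊕ Fin r) (Fin m ⊕ Fin r) ℂ)
      (Q : Matrix ((Fin m ⊕ Fin r) ⊕ (Fin s ⊕ Fin r))
             ((Fin m ⊕ Fin r) ⊕ (Fin s ⊕ Fin r)) ℂ),
      IsUnit P ∧ IsUnit Q ∧ P * Γ₁ * Q = Γ₁ ∧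
      ∃ (A' : Matrix (Fin m) (Fin m) ℂ) (B' : Matrix (Fin m) (Fin r) ℂ),
        P * Γ₂ * Q = Matrix.fromCols
          (Matrix.fromBlocks A' B' 0 0)
          (Matrix.fromBlocks 0 0 0 (1 : Matrix (Fin r) (Fin r) ℂ)) := by
  subst hΓ₁ hΓ₂
  obtain ⟨P, R, hP, hR, hPBR⟩ := B.exists_isUnit_mul_mul_eq_fromBlocks_zero_zero_zero_one hB
  have hPP : P * P⁻¹ = 1 := mul_nonsing_inv P ((isUnit_iff_isUnit_det P).mp hP)
  set D := P * A * P⁻¹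
  set C : Matrix (Fin s ⊕ Fin r) (Fin m ⊕ Fin r) ℂ :=
    fromBlocks 0 0 (-D.toBlocks₂₁) (-D.toBlocks₂₂)
  have hDC : D + P * B * (R * C) = fromBlocks D.toBlocks₁₁ D.toBlocks₁₂ 0 0 := by
    rw [← Matrix.mul_assoc, hPBR, fromBlocks_multiply]
    conv_lhs => rw [← fromBlocks_toBlocks D]
    rw [fromBlocks_add]
    congr 1 <;> simp
  refine ⟨P, fromBlocks P⁻¹ 0 (R * C) R, hP,
    isUnit_fromBlocks_zero₁₂.mpr ⟨isUnit_nonsing_inv_iff.mpr hP, hR⟩, ?_, D.toBlocks₁₁,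
    D.toBlocks₁₂, ?_⟩
  · simp [mul_fromCols, fromCols_mul_fromBlocks, hPP]
  · rw [mul_fromCols, fromCols_mul_fromBlocks, hDC]
    simp [hPBR]

/-- 'step i' normal form: with row partition M = (M−r) + r
(here m = M−r) and column partition N = (M−r) + r + (N−M) (here
N − M = s + r, so s = N−M−r and M < N means 0 < s + r), if Γ₁ = (I_M | 0)
and Γ₂ = (A | B) with rank(B) = r, then there are invertible P, Q
preserving Γ₁ and bringing Γ₂ to the quasidiagonal form
[[A', B', 0], [0, 0, E']] with E' = (0 | I_r). -/
theorem stmt_10 (m r s : ℕ) (hsr : 0 < s + r)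
    (A : Matrix (Fin m ⊕ Fin r) (Fin m ⊕ Fin r) ℂ)
    (B : Matrix (Fin m ⊕ Fin r) (Fin s ⊕ Fin r) ℂ)
    (hB : B.rank = r)
    (Γ₁ Γ₂ : Matrix (Fin m ⊕ Fin r) ((Fin m ⊕ Fin r) ⊕ (Fin s ⊕ Fin r)) ℂ)
    (hΓ₁ : Γ₁ = Matrix.fromCols (1 : Matrix (Fin m ⊕ Fin r) (Fin m ⊕ Fin r) ℂ)
                  (0 : Matrix (Fin m ⊕ Fin r) (Fin s ⊕ Fin r) ℂ))
    (hΓ₂ : Γ₂ = Matrix.fromCols A B) :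
    ∃ (P : Matrix (Fin m ⊕ Fin r) (Fin m ⊕ Fin r) ℂ)
      (Q : Matrix ((Fin m ⊕ Fin r) ⊕ (Fin s ⊕ Fin r))
             ((Fin m ⊕ Fin r) ⊕ (Fin s ⊕ Fin r)) ℂ),
      IsUnit P ∧ IsUnit Q ∧ P * Γ₁ * Q = Γ₁ ∧
      ∃ (A' : Matrix (Fin m) (Fin m) ℂ) (B' : Matrix (Fin m) (Fin r) ℂ),
        P * Γ₂ * Q = Matrix.fromCols
          (Matrix.fromBlocks A' B' 0 0)
          (Matrix.fromBlocks 0 0 0 (1 : Matrix (Fin r) (Fin r) ℂ)) :=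
  stmt_10_general m r s A B hB Γ₁ Γ₂ hΓ₁ hΓ₂
end

section
/- Let N ≥ 2M, Γ₁ = (I_M | 0_{M×(N−M)}), and Γ₂ = (A | B) an M×N complex matrix whose right block B (of size M×(N−M)) has full row rank M. Then there exist P ∈ GL_M(ℂ) and Q ∈ GL_N(ℂ) such that P Γ₁ Q = (I_M | 0_{M×(N−2M)} | 0_{M×M}) and P Γ₂ Q = (0_{M×M} | 0_{M×(N−2M)} | I_M). In particular, when N > 2M the transformed state has N − 2M zero columns in both coefficient matrices, so the state is not a truly entangled 2×M×N state but reduces to a 2×M×2M state. -/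
open Matrix

/-!
Since `B` has full row rank, it has a right inverse `C`, and its kernel has dimension
`N - 2M`; putting a basis `N₀` of that kernel next to `C` gives an invertible `R = (N₀ | C)`
with `B R = (0 | I)`. Then `Q = [[I, 0], [-R (0; A), R]]` clears `A` from `Γ₂` without
touching `Γ₁ = (I | 0)`, and `P = I` already works.
-/

namespace Matrix

variable {m n ι K : Type*} [Field K]

theorem mulVec_surjective_of_rank_eq_card [Fintype m] [Fintype n] (B : Matrix m n K)
    (hB : B.rank = Fintype.card m) : Function.Surjective B.mulVec := by
  rw [← coe_mulVecLin, ← LinearMap.range_eq_top]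
  apply Submodule.eq_top_of_finrank_eq
  rwa [Module.finrank_fintype_fun_eq_card]

theorem exists_mul_eq_zero_linearIndependent_col [Fintype n] [Fintype ι] (B : Matrix m n K)
    (h : B.rank + Fintype.card ι = Fintype.card n) :
    ∃ N : Matrix n ι K, B * N = 0 ∧ LinearIndependent K N.col := by
  have hker : Module.finrank K (LinearMap.ker B.mulVecLin) = Fintype.card ι := by
    have := LinearMap.finrank_range_add_finrank_ker B.mulVecLin
    rw [Module.finrank_fintype_fun_eq_card] at this
    exact Nat.add_left_cancel (this.trans h.symm)
  obtain ⟨b⟩ : Nonempty (Module.Basis ι K (LinearMap.ker B.mulVecLin)) :=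
    ⟨(Module.finBasisOfFinrankEq K _ hker).reindex (Fintype.equivFin ι).symm⟩
  refine ⟨of fun i j => (b j : n → K) i, ?_, ?_⟩
  · ext i j
    exact congr_fun (LinearMap.mem_ker.1 (b j).2) i
  · have hb := b.linearIndependent.map' _ (Submodule.ker_subtype _)
    convert hb using 1 <;> rfl

theorem isUnit_fromCols_of_mul_eq_zero_of_mul_eq_one [Fintype m] [Fintype ι] [DecidableEq m]
    [DecidableEq ι] {B : Matrix m (ι ⊕ m) K} {N : Matrix (ι ⊕ m) ι K} {C : Matrix (ι ⊕ m) m K}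
    (hN : B * N = 0) (hN_indep : LinearIndependent K N.col) (hC : B * C = 1) :
    IsUnit (fromCols N C) := by
  rw [← mulVec_injective_iff_isUnit, ← coe_mulVecLin, ← LinearMap.ker_eq_bot,
    LinearMap.ker_eq_bot']
  intro v hv
  rw [← Sum.elim_comp_inl_inr v, mulVecLin_apply, fromCols_mulVec_sumElim] at hv
  have hinr : v ∘ Sum.inr = 0 := by
    simpa [mulVec_add, mulVec_mulVec, hN, hC] using congr_arg (B *ᵥ ·) hv
  have hinl : v ∘ Sum.inl = 0 := mulVec_injective_iff.2 hN_indep <| by simpa [hinr] using hv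
  rw [← Sum.elim_comp_inl_inr v, hinl, hinr, Sum.elim_zero_zero]

theorem exists_isUnit_mul_eq_fromCols_zero_one [Fintype m] [Fintype ι] [DecidableEq m]
    [DecidableEq ι] (B : Matrix m (ι ⊕ m) K) (hB : B.rank = Fintype.card m) :
    ∃ R : Matrix (ι ⊕ m) (ι ⊕ m) K, IsUnit R ∧ B * R = fromCols 0 1 := by
  obtain ⟨C, hC⟩ :=
    mulVec_surjective_iff_exists_right_inverse.1 (mulVec_surjective_of_rank_eq_card B hB)
  obtain ⟨N, hN, hN_indep⟩ := exists_mul_eq_zero_linearIndependent_col (ι := ι) B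
    (by rw [hB, Fintype.card_sum, add_comm])
  exact ⟨fromCols N C, isUnit_fromCols_of_mul_eq_zero_of_mul_eq_one hN hN_indep hC,
    by rw [mul_fromCols, hN, hC]⟩

end Matrix

theorem stmt_11_general (M k : ℕ)
    (A : Matrix (Fin M) (Fin M) ℂ) (B : Matrix (Fin M) (Fin k ⊕ Fin M) ℂ)
    (hB : B.rank = M)
    (Γ₁ Γ₂ : Matrix (Fin M) (Fin M ⊕ (Fin k ⊕ Fin M)) ℂ)
    (hΓ₁ : Γ₁ = Matrix.fromCols (1 : Matrix (Fin M) (Fin M) ℂ)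
                  (0 : Matrix (Fin M) (Fin k ⊕ Fin M) ℂ))
    (hΓ₂ : Γ₂ = Matrix.fromCols A B) :
    ∃ (P : Matrix (Fin M) (Fin M) ℂ)
      (Q : Matrix (Fin M ⊕ (Fin k ⊕ Fin M)) (Fin M ⊕ (Fin k ⊕ Fin M)) ℂ),
      IsUnit P ∧ IsUnit Q ∧
      P * Γ₁ * Q = Matrix.fromCols (1 : Matrix (Fin M) (Fin M) ℂ)
        (Matrix.fromCols (0 : Matrix (Fin M) (Fin k) ℂ)
          (0 : Matrix (Fin M) (Fin M) ℂ)) ∧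
      P * Γ₂ * Q = Matrix.fromCols (0 : Matrix (Fin M) (Fin M) ℂ)
        (Matrix.fromCols (0 : Matrix (Fin M) (Fin k) ℂ)
          (1 : Matrix (Fin M) (Fin M) ℂ)) := by
  subst hΓ₁ hΓ₂
  obtain ⟨R, hR, hBR⟩ := exists_isUnit_mul_eq_fromCols_zero_one B (by simpa using hB)
  refine ⟨1, fromBlocks 1 0 (-(R * fromRows (0 : Matrix (Fin k) (Fin M) ℂ) A)) R, isUnit_one,
    isUnit_fromBlocks_zero₁₂.2 ⟨isUnit_one, hR⟩, ?_, ?_⟩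
  · simp [fromCols_mul_fromBlocks, fromCols_zero]
  · rw [Matrix.one_mul, fromCols_mul_fromBlocks, Matrix.mul_neg, ← Matrix.mul_assoc, hBR,
      fromCols_mul_fromRows]
    simp

/-- For N ≥ 2M (here N = M + k + M with k = N − 2M ≥ 0), if
Γ₁ = (I_M | 0 | 0) and Γ₂ = (A | B) with the right block B of full row
rank M, then there exist invertible P, Q with
P Γ₁ Q = (I_M | 0 | 0) and P Γ₂ Q = (0 | 0 | I_M). -/
theorem stmt_11 (M k : ℕ) (hM : 0 < M)
    (A : Matrix (Fin M) (Fin M) ℂ) (B : Matrix (Fin M) (Fin k ⊕ Fin M) ℂ)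
    (hB : B.rank = M)
    (Γ₁ Γ₂ : Matrix (Fin M) (Fin M ⊕ (Fin k ⊕ Fin M)) ℂ)
    (hΓ₁ : Γ₁ = Matrix.fromCols (1 : Matrix (Fin M) (Fin M) ℂ)
                  (0 : Matrix (Fin M) (Fin k ⊕ Fin M) ℂ))
    (hΓ₂ : Γ₂ = Matrix.fromCols A B) :
    ∃ (P : Matrix (Fin M) (Fin M) ℂ)
      (Q : Matrix (Fin M ⊕ (Fin k ⊕ Fin M)) (Fin M ⊕ (Fin k ⊕ Fin M)) ℂ),
      IsUnit P ∧ IsUnit Q ∧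
      P * Γ₁ * Q = Matrix.fromCols (1 : Matrix (Fin M) (Fin M) ℂ)
        (Matrix.fromCols (0 : Matrix (Fin M) (Fin k) ℂ)
          (0 : Matrix (Fin M) (Fin M) ℂ)) ∧
      P * Γ₂ * Q = Matrix.fromCols (0 : Matrix (Fin M) (Fin M) ℂ)
        (Matrix.fromCols (0 : Matrix (Fin M) (Fin k) ℂ)
          (1 : Matrix (Fin M) (Fin M) ℂ)) :=
  stmt_11_general M k A B hB Γ₁ Γ₂ hΓ₁ hΓ₂
end
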